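/- arXiv:1503.02018 — 5 statements merged into one kernel-verified Lean document; each statement's English description precedes it below -/
import Mathlib

section
/- Let $(f,g)$ be a regular sequence (in this order) in an integral domain $A$. Then $A = A[1/f] \cap A[1/g]$, where the intersection is taken inside the fraction field of $A$. -/
/-- If `(f, g)` is a regular sequence in an integral domain `A`, then
`A = A[1/f] ∩ A[1/g]` inside `Frac A`. -/
theorem stmt1 {A : Type*} [CommRing A] [IsDomain A] (f g : A)
    (hf : f ≠ 0)
    (hg : ∀ x : A, g * x ∈ Ideal.span {f} → x ∈ Ideal.span {f})
    (y : FractionRing A)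
    (hyf : ∃ (a : A) (n : ℕ), y * (algebraMap A (FractionRing A) f) ^ n
      = algebraMap A (FractionRing A) a)
    (hyg : ∃ (b : A) (m : ℕ), y * (algebraMap A (FractionRing A) g) ^ m
      = algebraMap A (FractionRing A) b) :
    ∃ c : A, y = algebraMap A (FractionRing A) c := by
  set φ := algebraMap A (FractionRing A) with hφ
  have hinj : Function.Injective φ := IsFractionRing.injective A (FractionRing A)
  have hφf : φ f ≠ 0 := fun h => hf (hinj (by simpa using h))
  -- regularity of powers of g mod f
  have hgm : ∀ (m : ℕ) (x : A), g ^ m * x ∈ Ideal.span {f} → x ∈ Ideal.span {f} := by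
    intro m
    induction m with
    | zero => intro x hx; simpa using hx
    | succ m ih =>
      intro x hx
      exact ih x (hg _ (by rw [show g * (g ^ m * x) = g ^ (m + 1) * x by ring]; exact hx))
  obtain ⟨b, m, hb⟩ := hyg
  obtain ⟨a, n, ha⟩ := hyf
  induction n generalizing a with
  | zero => exact ⟨a, by simpa using ha⟩
  | succ n ih =>
    -- g^m * a = f^(n+1) * b in A
    have key : φ (g ^ m * a) = φ (f ^ (n + 1) * b) := by
      rw [map_mul, map_mul, map_pow, map_pow, ← ha, ← hb]
      ring
    have keyA : g ^ m * a = f ^ (n + 1) * b := hinj key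
    have haf : a ∈ Ideal.span {f} := by
      apply hgm m
      rw [keyA]
      exact Ideal.mem_span_singleton'.mpr ⟨f ^ n * b, by ring⟩
    obtain ⟨a', ha'⟩ := Ideal.mem_span_singleton'.mp haf
    apply ih a'
    have : y * φ f ^ n * φ f = φ a' * φ f := by
      rw [mul_assoc, ← pow_succ, ha, ← ha', map_mul]
    exact mul_right_cancel₀ hφf this
end

section
/- Let $(f,g)$ be a regular sequence in an integral domain $A$. If both $A[1/f]$ and $A[1/g]$ are integrally closed in $\operatorname{Frac}(A)$, then $A$ is integrally closed in $\operatorname{Frac}(A)$. -/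
/-- If `(f, g)` is a regular sequence in a domain `A` and both `A[1/f]` and
`A[1/g]` are integrally closed in `Frac A`, then `A` is integrally closed in `Frac A`. -/
theorem stmt2 {A : Type*} [CommRing A] [IsDomain A] (f g : A)
    (hf : f ≠ 0)
    (hg : ∀ x : A, g * x ∈ Ideal.span {f} → x ∈ Ideal.span {f})
    (Af Ag : Subalgebra A (FractionRing A))
    (hAf : ∀ y : FractionRing A, y ∈ Af ↔
      ∃ (a : A) (n : ℕ), y * (algebraMap A (FractionRing A) f) ^ n
        = algebraMap A (FractionRing A) a)
    (hAg : ∀ y : FractionRing A, y ∈ Ag ↔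
      ∃ (b : A) (m : ℕ), y * (algebraMap A (FractionRing A) g) ^ m
        = algebraMap A (FractionRing A) b)
    (hfc : ∀ y : FractionRing A, IsIntegral (↥Af) y → y ∈ Af)
    (hgc : ∀ y : FractionRing A, IsIntegral (↥Ag) y → y ∈ Ag) :
    ∀ y : FractionRing A, IsIntegral A y → ∃ c : A, y = algebraMap A (FractionRing A) c := by
  -- rephrase regularity in terms of divisibility
  have hg' : ∀ x : A, f ∣ g * x → f ∣ x := by
    intro x hx
    have := hg x (Ideal.mem_span_singleton.2 hx)
    exact Ideal.mem_span_singleton.1 this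
  -- g is regular mod f^n
  have key1 : ∀ (n : ℕ) (x : A), f ^ n ∣ g * x → f ^ n ∣ x := by
    intro n
    induction n with
    | zero => intro x _; simpa using one_dvd x
    | succ n ih =>
      intro x hx
      have h1 : f ∣ g * x := dvd_trans (dvd_pow_self f (Nat.succ_ne_zero n)) hx
      have h1' : f ∣ x := hg' x h1
      obtain ⟨x', rfl⟩ := h1'
      obtain ⟨c, hc⟩ := hx
      have : f * (g * x') = f * (f ^ n * c) := by ring_nf; ring_nf at hc; linear_combination hc
      have h2 : g * x' = f ^ n * c := mul_left_cancel₀ hf this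
      have := ih x' ⟨c, h2⟩
      obtain ⟨d, hd⟩ := this
      exact ⟨d, by rw [hd]; ring⟩
  -- g^m is regular mod f^n
  have key2 : ∀ (m n : ℕ) (x : A), f ^ n ∣ g ^ m * x → f ^ n ∣ x := by
    intro m
    induction m with
    | zero => intro n x hx; simpa using hx
    | succ m ih =>
      intro n x hx
      have : f ^ n ∣ g * (g ^ m * x) := by
        have : g ^ (m + 1) * x = g * (g ^ m * x) := by ring
        rwa [this] at hx
      exact ih n x (key1 n _ this)
  intro y hy
  -- y is in Af and Ag
  have hyf : y ∈ Af := hfc y (hy.tower_top)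
  have hyg : y ∈ Ag := hgc y (hy.tower_top)
  obtain ⟨a, n, ha⟩ := (hAf y).1 hyf
  obtain ⟨b, m, hb⟩ := (hAg y).1 hyg
  set φ := algebraMap A (FractionRing A)
  have hinj : Function.Injective φ := IsFractionRing.injective A (FractionRing A)
  -- a * g^m = b * f^n
  have hab : φ (a * g ^ m) = φ (b * f ^ n) := by
    have : y * φ f ^ n * φ g ^ m = y * φ g ^ m * φ f ^ n := by ring
    rw [ha, hb] at this
    simpa [map_mul, map_pow] using this
  have hab' : a * g ^ m = b * f ^ n := hinj hab
  have hdvd : f ^ n ∣ a := key2 m n a ⟨b, by linear_combination hab'⟩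
  obtain ⟨c, hc⟩ := hdvd
  refine ⟨c, ?_⟩
  have hfn : φ f ^ n ≠ 0 := pow_ne_zero n (fun h => hf (hinj (by simpa using h)))
  have : y * φ f ^ n = φ c * φ f ^ n := by
    rw [ha, hc, map_mul, map_pow]; ring
  exact mul_right_cancel₀ hfn this
end

section
/- Let $A$ be an integral domain (not necessarily Noetherian) such that $\pi A$ is a nonzero principal prime ideal and the localization $A_{(\pi)}$ of $A$ at the multiplicative set $A \setminus \pi A$ is an integrally closed domain. Then $A$ is integrally closed in $A[1/\pi]$. -/
/-- If `πA` is a nonzero principal prime ideal of a domain `A` and the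
localization of `A` at `πA` is integrally closed, then `A` is integrally
closed in `A[1/π]`. -/
theorem stmt5 {A : Type*} [CommRing A] [IsDomain A] (π : A) (hπ0 : π ≠ 0)
    (hprime : (Ideal.span {π}).IsPrime)
    (hdom : IsDomain (Localization.AtPrime (Ideal.span {π})))
    (hic : IsIntegrallyClosed (Localization.AtPrime (Ideal.span {π}))) :
    ∀ y : FractionRing A,
      (∃ (a : A) (n : ℕ), y * (algebraMap A (FractionRing A) π) ^ n
        = algebraMap A (FractionRing A) a) →
      IsIntegral A y → ∃ c : A, y = algebraMap A (FractionRing A) c := by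
  set P := Ideal.span {π} with hP
  set Aπ := Localization.AtPrime P with hAπ
  letI : Algebra Aπ (FractionRing A) :=
    inferInstanceAs (Algebra Aπ (Localization (nonZeroDivisors A)))
  haveI : IsScalarTower A Aπ (FractionRing A) :=
    inferInstanceAs (IsScalarTower A Aπ (Localization (nonZeroDivisors A)))
  haveI : IsFractionRing Aπ (FractionRing A) :=
    inferInstanceAs (IsFractionRing Aπ (Localization (nonZeroDivisors A)))
  rintro y ⟨a, n, hyn⟩ hint
  -- y lies in the image of Aπ
  have hintπ : IsIntegral Aπ y := hint.tower_top
  obtain ⟨x, hx⟩ := IsIntegrallyClosed.isIntegral_iff.mp hintπ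
  obtain ⟨⟨b, s⟩, hbs⟩ := IsLocalization.mk'_surjective P.primeCompl x
  have hspec : x * algebraMap A Aπ s = algebraMap A Aπ b := by
    rw [← hbs]; exact IsLocalization.mk'_spec Aπ b s
  have hys : y * algebraMap A (FractionRing A) s = algebraMap A (FractionRing A) b := by
    have := congrArg (algebraMap Aπ (FractionRing A)) hspec
    rw [map_mul, hx, ← IsScalarTower.algebraMap_apply, ← IsScalarTower.algebraMap_apply] at this
    exact this
  have hinj := IsFractionRing.injective A (FractionRing A)
  have hπK : algebraMap A (FractionRing A) π ≠ 0 := fun h => hπ0 (hinj (by simpa using h))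
  clear hx hbs hspec hintπ hint
  induction n generalizing a with
  | zero => exact ⟨a, by simpa using hyn⟩
  | succ n ih =>
    have key : a * s = b * π ^ (n + 1) := by
      apply hinj
      rw [map_mul, map_mul, ← hyn, ← hys, map_pow]
      ring
    have : a * (s : A) ∈ P := by
      rw [key, hP, Ideal.mem_span_singleton]
      exact ⟨b * π ^ n, by ring⟩
    have ha : a ∈ P := ((hprime.mem_or_mem this).resolve_right s.2)
    obtain ⟨a', ha'⟩ := Ideal.mem_span_singleton.mp ha
    apply ih a'
    have : (y * (algebraMap A (FractionRing A)) π ^ n) * (algebraMap A (FractionRing A)) π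
        = algebraMap A (FractionRing A) a' * (algebraMap A (FractionRing A)) π := by
      rw [← map_mul, mul_comm a' π, ← ha', ← hyn, pow_succ]; ring
    exact mul_right_cancel₀ hπK this
end

section
/- Let $A \hookrightarrow B$ be an integral extension of integrally closed domains, where $\pi A$ is a principal prime ideal of $A$. If the ideal $\pi B_{(\pi)}$ of $B_{(\pi)} := B \otimes_A A_{(\pi)}$ is a radical ideal, then $\pi B$ is a radical ideal of $B$. -/
open Polynomial

/-- Minimal polynomial of `(algebraMap K L c) * y` is the `scaleRoots` by `c` of
the minimal polynomial of `y`. -/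
lemma minpoly_mul_algebraMap' {K L : Type*} [Field K] [Field L] [Algebra K L]
    {y : L} (hy : IsIntegral K y) {c : K} (hc : c ≠ 0) :
    minpoly K (algebraMap K L c * y) = (minpoly K y).scaleRoots c := by
  have hcy : IsIntegral K (algebraMap K L c * y) := (isIntegral_algebraMap).mul hy
  have h1 : (Polynomial.aeval (algebraMap K L c * y)) ((minpoly K y).scaleRoots c) = 0 :=
    Polynomial.scaleRoots_aeval_eq_zero (minpoly.aeval K y)
  have hmono : ((minpoly K y).scaleRoots c).Monic :=
    (Polynomial.monic_scaleRoots_iff c).mpr (minpoly.monic hy)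
  have h2 : (Polynomial.aeval y) ((minpoly K (algebraMap K L c * y)).scaleRoots c⁻¹) = 0 := by
    have := Polynomial.scaleRoots_aeval_eq_zero (r := c⁻¹)
      (minpoly.aeval K (algebraMap K L c * y))
    rwa [← mul_assoc, ← map_mul, inv_mul_cancel₀ hc, map_one, one_mul] at this
  have hdeg : ((minpoly K y).scaleRoots c).natDegree
      ≤ (minpoly K (algebraMap K L c * y)).natDegree := by
    rw [Polynomial.natDegree_scaleRoots]
    calc (minpoly K y).natDegree
        ≤ ((minpoly K (algebraMap K L c * y)).scaleRoots c⁻¹).natDegree :=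
          Polynomial.natDegree_le_of_dvd (minpoly.dvd K _ h2)
            (((Polynomial.monic_scaleRoots_iff c⁻¹).mpr (minpoly.monic hcy)).ne_zero)
      _ = (minpoly K (algebraMap K L c * y)).natDegree := Polynomial.natDegree_scaleRoots _ _
  exact (Polynomial.eq_of_monic_of_dvd_of_natDegree_le (minpoly.monic hcy) hmono
    (minpoly.dvd K _ h1) hdeg).symm

/-- Let `A ⊆ B` be an integral extension of integrally closed domains, `πA` a
principal prime ideal of `A`. If `π·B_(π)` is a radical ideal of
`B_(π) = B ⊗_A A_(π)`, then `πB` is a radical ideal of `B`. -/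
theorem stmt6 {A B : Type*} [CommRing A] [CommRing B] [IsDomain A] [IsDomain B]
    [Algebra A B] (hinj : Function.Injective (algebraMap A B))
    [Algebra.IsIntegral A B]
    [IsIntegrallyClosed A] [IsIntegrallyClosed B]
    (π : A) (hπ0 : π ≠ 0) (hprime : (Ideal.span {π}).IsPrime)
    (hrad : (Ideal.span {algebraMap B
        (Localization ((Ideal.span {π}).primeCompl.map (algebraMap A B)))
        (algebraMap A B π)}).IsRadical) :
    (Ideal.span {algebraMap A B π}).IsRadical := by
  have hπp : Prime π := (Ideal.span_singleton_prime hπ0).mp hprime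
  intro x hx
  obtain ⟨n, hxn⟩ := Ideal.mem_radical_iff.mp hx
  set f : A →+* B := algebraMap A B with hf
  set S : Submonoid B := (Ideal.span {π}).primeCompl.map (algebraMap A B) with hS
  set Bs := Localization S with hBs
  set g : B →+* Bs := algebraMap B Bs with hg
  have hSnzd : S ≤ nonZeroDivisors B := by
    rintro _ ⟨a, ha, rfl⟩
    refine mem_nonZeroDivisors_of_ne_zero (fun h0 => ?_)
    have : a = 0 := hinj (by simpa using h0)
    exact ha (this ▸ (Ideal.span {π}).zero_mem)
  have hginj : Function.Injective g := IsLocalization.injective Bs hSnzd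
  -- From radicality in the localization we get `x * f a = f π * b` with `a ∉ πA`.
  have hdvd : g (f π) ∣ g x := by
    have h1 : (g x) ^ n ∈ Ideal.span {g (f π)} := by
      rw [Ideal.mem_span_singleton] at hxn ⊢
      rw [← map_pow]
      exact map_dvd g hxn
    have := hrad (Ideal.mem_radical_iff.mpr ⟨n, h1⟩)
    exact Ideal.mem_span_singleton.mp this
  obtain ⟨t, ht⟩ := hdvd
  obtain ⟨⟨b, s⟩, hbs⟩ := IsLocalization.mk'_surjective S t
  dsimp only at hbs
  obtain ⟨a, haP, hfa⟩ := s.2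
  have key : x * f a = f π * b := by
    apply hginj
    have hspec := IsLocalization.mk'_spec Bs b s
    rw [map_mul, map_mul, ht, ← hbs, hfa, mul_assoc, hspec]
  -- Now work inside the fraction fields.
  have ha0 : a ≠ 0 := fun h => haP (h ▸ (Ideal.span {π}).zero_mem)
  set K := FractionRing A
  set L := FractionRing B
  haveI : Module.IsTorsionFree A B := NoZeroSMulDivisors.iff_algebraMap_injective.mpr hinj
  letI : Algebra K L := FractionRing.liftAlgebra A L
  haveI : IsScalarTower A K L := FractionRing.isScalarTower_liftAlgebra A L
  have hKLinj : Function.Injective (algebraMap K L) := (algebraMap K L).injective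
  have hAKinj : Function.Injective (algebraMap A K) := IsFractionRing.injective A K
  set πK : K := algebraMap A K π with hπK
  have hπK0 : πK ≠ 0 := by
    rw [hπK, ne_eq, map_eq_zero_iff _ hAKinj]; exact hπ0
  set aK : K := algebraMap A K a with haK
  have haK0 : aK ≠ 0 := by
    rw [haK, ne_eq, map_eq_zero_iff _ hAKinj]; exact ha0
  set xL : L := algebraMap B L x with hxL
  set bL : L := algebraMap B L b with hbL
  have hπL : algebraMap B L (f π) = algebraMap K L πK := by
    rw [hf, ← IsScalarTower.algebraMap_apply A B L, IsScalarTower.algebraMap_apply A K L, hπK]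
  have haL : algebraMap B L (f a) = algebraMap K L aK := by
    rw [hf, ← IsScalarTower.algebraMap_apply A B L, IsScalarTower.algebraMap_apply A K L, haK]
  have hπL0 : algebraMap K L πK ≠ 0 := by
    rw [ne_eq, map_eq_zero_iff _ hKLinj]; exact hπK0
  set y : L := (algebraMap K L πK)⁻¹ * xL with hy
  have hxy : xL = algebraMap K L πK * y := by
    rw [hy, ← mul_assoc, mul_inv_cancel₀ hπL0, one_mul]
  have hkeyL : xL * algebraMap K L aK = algebraMap K L πK * bL := by
    have := congrArg (algebraMap B L) key
    rwa [map_mul, map_mul, hπL, haL, ← hxL, ← hbL] at this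
  have hby : bL = algebraMap K L aK * y := by
    rw [hy]
    apply mul_left_cancel₀ hπL0
    rw [← hkeyL, mul_left_comm, ← mul_assoc (algebraMap K L πK), mul_inv_cancel₀ hπL0, one_mul,
      mul_comm]
  -- y is integral over K
  have hxint : IsIntegral A xL := (Algebra.IsIntegral.isIntegral (R := A) x).map
    (IsScalarTower.toAlgHom A B L)
  have hbint : IsIntegral A bL := (Algebra.IsIntegral.isIntegral (R := A) b).map
    (IsScalarTower.toAlgHom A B L)
  have hyK : IsIntegral K y := by
    rw [hy, ← map_inv₀]
    exact (isIntegral_algebraMap).mul (hxint.tower_top (A := K))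
  -- the two scaleRoots identities
  have h1 : minpoly K xL = (minpoly K y).scaleRoots πK := by
    rw [hxy]; exact minpoly_mul_algebraMap' hyK hπK0
  have h2 : minpoly K bL = (minpoly K y).scaleRoots aK := by
    rw [hby]; exact minpoly_mul_algebraMap' hyK haK0
  have hx' : minpoly K xL = (minpoly A x).map (algebraMap A K) :=
    minpoly.isIntegrallyClosed_eq_field_fractions K L (Algebra.IsIntegral.isIntegral x)
  have hb' : minpoly K bL = (minpoly A b).map (algebraMap A K) :=
    minpoly.isIntegrallyClosed_eq_field_fractions K L (Algebra.IsIntegral.isIntegral b)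
  set p := minpoly K y with hp
  set m := p.natDegree with hm
  -- each coefficient of p is in the image of A
  have hcoeff : ∀ i, p.coeff i ∈ Set.range (algebraMap A K) := by
    intro i
    rcases lt_or_ge i m with hi | hi
    · set k := m - i with hk
      have hπdvd : ¬ π ∣ a := fun hd => haP (Ideal.mem_span_singleton.mpr hd)
      have hu : algebraMap A K ((minpoly A x).coeff i) = p.coeff i * πK ^ k := by
        have := congrArg (fun q => Polynomial.coeff q i) (hx'.symm.trans h1)
        simpa [Polynomial.coeff_scaleRoots, Polynomial.coeff_map,
          Polynomial.natDegree_scaleRoots] using this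
      have hv : algebraMap A K ((minpoly A b).coeff i) = p.coeff i * aK ^ k := by
        have := congrArg (fun q => Polynomial.coeff q i) (hb'.symm.trans h2)
        simpa [Polynomial.coeff_scaleRoots, Polynomial.coeff_map,
          Polynomial.natDegree_scaleRoots] using this
      set u := (minpoly A x).coeff i
      set v := (minpoly A b).coeff i
      have heq : a ^ k * u = π ^ k * v := by
        apply hAKinj
        rw [map_mul, map_mul, map_pow, map_pow, hu, hv, ← haK, ← hπK]
        ring
      have hdvd2 : π ^ k ∣ u :=
        hπp.pow_dvd_of_dvd_mul_left (a := a ^ k) (b := u) k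
          (fun hd => hπdvd (hπp.dvd_of_dvd_pow hd)) ⟨v, heq⟩
      obtain ⟨w, hw⟩ := hdvd2
      refine ⟨w, ?_⟩
      have : algebraMap A K (π ^ k * w) = p.coeff i * πK ^ k := by rw [← hw]; exact hu
      rw [map_mul, map_pow, ← hπK] at this
      have hcancel := mul_right_cancel₀ (pow_ne_zero k hπK0)
        (by rw [mul_comm] at this; exact this.trans rfl : algebraMap A K w * πK ^ k
          = p.coeff i * πK ^ k)
      exact hcancel
    · rcases eq_or_lt_of_le hi with hieq | hilt
      · refine ⟨1, ?_⟩
        rw [map_one, ← hieq]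
        exact ((minpoly.monic hyK).coeff_natDegree).symm
      · exact ⟨0, by rw [map_zero, Polynomial.coeff_eq_zero_of_natDegree_lt hilt]⟩
  -- lift p to a monic polynomial over A
  have hlift : p ∈ Polynomial.lifts (algebraMap A K) :=
    (Polynomial.lifts_iff_coeff_lifts p).mpr hcoeff
  obtain ⟨P, hPmap, _, hPmonic⟩ :=
    Polynomial.lifts_and_natDegree_eq_and_monic hlift (minpoly.monic hyK)
  have hyA : IsIntegral A y := by
    refine ⟨P, hPmonic, ?_⟩
    have : Polynomial.aeval y (P.map (algebraMap A K)) = 0 := by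
      rw [hPmap]; exact minpoly.aeval K y
    rwa [Polynomial.aeval_map_algebraMap] at this
  have hyB : IsIntegral B y := hyA.tower_top (A := B)
  obtain ⟨b', hb'⟩ := IsIntegrallyClosed.isIntegral_iff.mp hyB
  rw [Ideal.mem_span_singleton]
  refine ⟨b', IsFractionRing.injective B L ?_⟩
  rw [map_mul, hπL, hb', ← hxy]
end

section
/- Let $A$ be a perfect $\mathbb{F}_p$-algebra. Then any two $p$-adic deformations of $A$ are isomorphic: if $\mathcal{A}_1, \mathcal{A}_2$ are $p$-torsion free, $p$-adically complete rings with $\mathcal{A}_i/p\mathcal{A}_i \cong A$, then there is a ring isomorphism $\mathcal{A}_1 \cong \mathcal{A}_2$ lifting the identity of $A$. -/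
open MvPolynomial


private lemma stmt16.pow_p_cong {R : Type*} [CommRing R] (p n : ℕ) {a b : R}
    (h1 : (p : R) ∣ a - b) (hn : (p : R) ^ n ∣ a - b) :
    (p : R) ^ (n + 1) ∣ a ^ p - b ^ p := by
  rw [← geom_sum₂_mul a b p, pow_succ']
  refine mul_dvd_mul ?_ hn
  have hba : (p : R) ∣ b - a := dvd_sub_comm.mp h1
  have hterm : ∀ i ∈ Finset.range p, (p : R) ∣ a ^ i * b ^ (p - 1 - i) - a ^ (p - 1) := by
    intro i hi
    have hsplit : a ^ (p - 1) = a ^ i * a ^ (p - 1 - i) := by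
      rw [← pow_add]; congr 1
      have := Finset.mem_range.mp hi; omega
    rw [hsplit, ← mul_sub]
    exact ((hba.trans (sub_dvd_pow_sub_pow b a _)).mul_left _)
  have hsum : (p : R) ∣ ∑ i ∈ Finset.range p, (a ^ i * b ^ (p - 1 - i) - a ^ (p - 1)) :=
    Finset.dvd_sum hterm
  have hrw : (∑ i ∈ Finset.range p, a ^ i * b ^ (p - 1 - i))
      = (∑ i ∈ Finset.range p, (a ^ i * b ^ (p - 1 - i) - a ^ (p - 1))) + p * a ^ (p - 1) := by
    rw [Finset.sum_sub_distrib, Finset.sum_const, Finset.card_range, nsmul_eq_mul]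
    ring
  rw [hrw]
  exact dvd_add hsum (Dvd.intro _ rfl)

private lemma stmt16.exists_Q (p : ℕ) (hp : p.Prime) :
    ∃ Q : MvPolynomial (Fin 3) ℤ,
      C (p : ℤ) * Q = (X 0 + X 1 + C (p : ℤ) * X 2) ^ p - X 0 ^ p - X 1 ^ p := by
  haveI : Fact p.Prime := ⟨hp⟩
  have hmap : (MvPolynomial.map (Int.castRingHom (ZMod p))
      ((X 0 + X 1 + C (p:ℤ) * X 2) ^ p - X 0 ^ p - X 1 ^ p) : MvPolynomial (Fin 3) (ZMod p)) = 0 := by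
    have hC : (MvPolynomial.map (Int.castRingHom (ZMod p)) (C (p:ℤ) : MvPolynomial (Fin 3) ℤ))
        = 0 := by
      rw [map_C]; simp [CharP.cast_eq_zero]
    simp only [map_sub, map_pow, map_add, map_mul, map_X, hC, zero_mul, add_zero]
    rw [add_pow_char]; ring
  have h : C (p : ℤ) ∣ (X 0 + X 1 + C (p : ℤ) * X 2 : MvPolynomial (Fin 3) ℤ) ^ p
      - X 0 ^ p - X 1 ^ p := by
    rw [C_dvd_iff_dvd_coeff]
    intro m
    rw [← ZMod.intCast_zmod_eq_zero_iff_dvd]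
    have h2 := congrArg (coeff m) hmap
    rw [coeff_map, coeff_zero] at h2
    exact h2
  obtain ⟨Q, hQ⟩ := h
  exact ⟨Q, hQ.symm⟩

private lemma stmt16.eval_nat {R S : Type*} [CommRing R] [CommRing S] (f : R →+* S)
    (r : Fin 3 → R) (Q : MvPolynomial (Fin 3) ℤ) :
    f (eval₂ (Int.castRingHom R) r Q) = eval₂ (Int.castRingHom S) (fun i => f (r i)) Q := by
  rw [eval₂_comp_left]
  congr 1
  ext n
  simp

private lemma stmt16.eval_Q {p : ℕ} {Q : MvPolynomial (Fin 3) ℤ}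
    (hQ : C (p : ℤ) * Q = (X 0 + X 1 + C (p : ℤ) * X 2) ^ p - X 0 ^ p - X 1 ^ p)
    {R : Type*} [CommRing R] (r : Fin 3 → R) :
    (p : R) * eval₂ (Int.castRingHom R) r Q
      = (r 0 + r 1 + (p : R) * r 2) ^ p - r 0 ^ p - r 1 ^ p := by
  have := congrArg (eval₂ (Int.castRingHom R) r) hQ
  simpa using this

private lemma stmt16.key_exists {A B₁ B₂ : Type*} [CommRing A] [CommRing B₁] [CommRing B₂]
    (p : ℕ) (hp : p.Prime) [CharP A p]
    (hperf : Function.Bijective (fun x : A => x ^ p))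
    (π₁ : B₁ →+* A) (π₂ : B₂ →+* A)
    (h₁s : Function.Surjective π₁) (h₂s : Function.Surjective π₂)
    (hk₁ : ∀ x : B₁, π₁ x = 0 ↔ (p : B₁) ∣ x)
    (hk₂ : ∀ x : B₂, π₂ x = 0 ↔ (p : B₂) ∣ x)
    (h₁tf : (p : B₁) ∈ nonZeroDivisors B₁)
    [IsAdicComplete (Ideal.span {(p : B₂)}) B₂] :
    ∃ φ : B₁ →+* B₂, π₂.comp φ = π₁ := by
  haveI : Fact p.Prime := ⟨hp⟩
  classical
  obtain ⟨Q, hQ⟩ := stmt16.exists_Q p hp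
  choose σ hσ using h₂s
  have hdec : ∀ x : B₁, ∃ y z, x = y ^ p + (p : B₁) * z := by
    intro x
    obtain ⟨b, hb⟩ := hperf.2 (π₁ x)
    obtain ⟨y, hy⟩ := h₁s b
    have hd : (p : B₁) ∣ x - y ^ p := (hk₁ _).mp (by
      rw [map_sub, map_pow, hy]
      simp only at hb
      rw [hb, sub_self])
    obtain ⟨z, hz⟩ := hd
    exact ⟨y, z, by linear_combination hz⟩
  choose Y Z hYZ using hdec
  -- the sequence of approximations
  set g : ℕ → B₁ → B₂ := fun n => Nat.rec (fun x => σ (π₁ x))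
    (fun _ gn x => gn (Y x) ^ p + (p : B₂) * gn (Z x)) n with hgdef
  have hg0 : ∀ x, g 0 x = σ (π₁ x) := fun _ => rfl
  have hgs : ∀ n x, g (n + 1) x = g n (Y x) ^ p + (p : B₂) * g n (Z x) := fun _ _ => rfl
  -- reduction of g n is π₁
  have hπp : (π₂ ((p : B₂)) : A) = 0 := by rw [map_natCast]; exact CharP.cast_eq_zero A p
  have hπY : ∀ x, (π₁ (Y x)) ^ p = π₁ x := by
    intro x
    conv_rhs => rw [hYZ x]
    rw [map_add, map_mul, map_natCast, CharP.cast_eq_zero, zero_mul, add_zero, map_pow]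
  have hA : ∀ n x, π₂ (g n x) = π₁ x := by
    intro n
    induction n with
    | zero => intro x; rw [hg0, hσ]
    | succ n ih =>
      intro x
      rw [hgs, map_add, map_mul, map_pow, ih, ih, hπp, zero_mul, add_zero, hπY]
  have hdvdπ : ∀ a b : B₂, π₂ a = π₂ b → (p : B₂) ∣ a - b := by
    intro a b h
    exact (hk₂ _).mp (by rw [map_sub, h, sub_self])
  have hFi : ∀ a b : A, a ^ p = b ^ p → a = b := fun a b h => hperf.1 h
  
  have hcan : ∀ a b : B₁, (p : B₁) * a = (p : B₁) * b → a = b := by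
    intro a b h
    have h2 : (a - b) * (p : B₁) = 0 := by ring_nf; linear_combination h
    have := (mem_nonZeroDivisors_iff.mp h₁tf).2 _ h2
    exact sub_eq_zero.mp this
  
  -- structure of the decomposition on B₁
  have h1a : ∀ x y : B₁, π₁ (Y (x + y)) = π₁ (Y x) + π₁ (Y y) := by
    intro x y
    apply hFi
    rw [hπY, add_pow_char, hπY, hπY, map_add]
  have hYadd : ∀ x y : B₁, ∃ s, Y (x + y) = Y x + Y y + (p : B₁) * s := by
    intro x y
    obtain ⟨s, hs⟩ := (hk₁ _).mp (show π₁ (Y (x + y) - (Y x + Y y)) = 0 by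
      rw [map_sub, map_add, h1a, sub_self])
    exact ⟨s, by linear_combination hs⟩
  choose Sa hSa using hYadd
  have hZadd : ∀ x y : B₁, Z (x + y) = Z x + Z y
      - eval₂ (Int.castRingHom B₁) ![Y x, Y y, Sa x y] Q := by
    intro x y
    apply hcan
    have hE := stmt16.eval_Q hQ (![Y x, Y y, Sa x y])
    simp only [Matrix.cons_val_zero, Matrix.cons_val_one, Matrix.head_cons,
      Matrix.cons_val_two, Matrix.tail_cons] at hE
    have hYp : Y (x + y) ^ p = (Y x + Y y + (p : B₁) * Sa x y) ^ p := by rw [hSa]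
    linear_combination (hYZ x) + (hYZ y) - (hYZ (x + y)) + hE - hYp
  have h1m : ∀ x y : B₁, π₁ (Y (x * y)) = π₁ (Y x) * π₁ (Y y) := by
    intro x y
    apply hFi
    rw [hπY, mul_pow, hπY, hπY, map_mul]
  have hYmul : ∀ x y : B₁, ∃ s, Y (x * y) = Y x * Y y + (p : B₁) * s := by
    intro x y
    obtain ⟨s, hs⟩ := (hk₁ _).mp (show π₁ (Y (x * y) - (Y x * Y y)) = 0 by
      rw [map_sub, map_mul, h1m, sub_self])
    exact ⟨s, by linear_combination hs⟩
  choose Sm hSm using hYmul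
  have hZmul : ∀ x y : B₁, Z (x * y) = Y x ^ p * Z y + Y y ^ p * Z x + (p : B₁) * (Z x * Z y)
      - eval₂ (Int.castRingHom B₁) ![Y x * Y y, 0, Sm x y] Q := by
    intro x y
    apply hcan
    have hE := stmt16.eval_Q hQ (![Y x * Y y, 0, Sm x y])
    simp only [Matrix.cons_val_zero, Matrix.cons_val_one, Matrix.head_cons,
      Matrix.cons_val_two, Matrix.tail_cons] at hE
    rw [add_zero, zero_pow hp.ne_zero, sub_zero] at hE
    have hYp : Y (x * y) ^ p = (Y x * Y y + (p : B₁) * Sm x y) ^ p := by rw [hSm]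
    linear_combination -(hYZ (x * y)) - hYp + hE + y * (hYZ x)
      + (Y x ^ p + (p : B₁) * Z x) * (hYZ y)
  have h1o : π₁ (Y 1) = 1 := by
    apply hFi
    rw [hπY, map_one, one_pow]
  obtain ⟨s₀, hs₀⟩ : ∃ s₀, Y 1 = 1 + (p : B₁) * s₀ := by
    obtain ⟨s, hs⟩ := (hk₁ _).mp (show π₁ (Y 1 - 1) = 0 by rw [map_sub, map_one, h1o, sub_self])
    exact ⟨s, by linear_combination hs⟩
  have hZ1 : Z 1 = - eval₂ (Int.castRingHom B₁) ![1, 0, s₀] Q := by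
    apply hcan
    have hE := stmt16.eval_Q hQ (![1, 0, s₀])
    simp only [Matrix.cons_val_zero, Matrix.cons_val_one, Matrix.head_cons,
      Matrix.cons_val_two, Matrix.tail_cons] at hE
    rw [add_zero, one_pow, zero_pow hp.ne_zero, sub_zero] at hE
    have hYp : Y 1 ^ p = (1 + (p : B₁) * s₀) ^ p := by rw [hs₀]
    linear_combination -(hYZ 1) + hE - hYp
  
  -- main induction: g n is a ring hom mod p^n
  have hH : ∀ n : ℕ, (∀ x y : B₁, (p : B₂) ^ n ∣ g n (x + y) - (g n x + g n y))
      ∧ (∀ x y : B₁, (p : B₂) ^ n ∣ g n (x * y) - g n x * g n y)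
      ∧ ((p : B₂) ^ n ∣ g n 1 - 1) := by
    intro n
    induction n with
    | zero => exact ⟨fun _ _ => by rw [pow_zero]; exact one_dvd _,
        fun _ _ => by rw [pow_zero]; exact one_dvd _, by rw [pow_zero]; exact one_dvd _⟩
    | succ n ih =>
      obtain ⟨ihA, ihM, ihO⟩ := ih
      set I : Ideal B₂ := Ideal.span {(p : B₂) ^ n} with hI
      have hmk : ∀ a b : B₂, Ideal.Quotient.mk I a = Ideal.Quotient.mk I b
          ↔ (p : B₂) ^ n ∣ a - b := by
        intro a b
        rw [Ideal.Quotient.eq, Ideal.mem_span_singleton]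
      have hzero : (p : B₂) ^ n ∣ g n 0 := by
        have h00 := ihA 0 0
        rw [add_zero] at h00
        have : g n 0 = -(g n (0 : B₁) - (g n 0 + g n 0)) := by ring
        rw [this]
        exact h00.neg_right
      let hh : B₁ →+* B₂ ⧸ I :=
        { toFun := fun x => Ideal.Quotient.mk I (g n x)
          map_one' := (hmk _ _).mpr ihO
          map_mul' := fun x y => by rw [← map_mul]; exact (hmk _ _).mpr (ihM x y)
          map_zero' := (hmk _ _).mpr (by rw [sub_zero]; exact hzero)
          map_add' := fun x y => by rw [← map_add]; exact (hmk _ _).mpr (ihA x y) }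
      have hhh : ∀ x : B₁, hh x = Ideal.Quotient.mk I (g n x) := fun _ => rfl
      -- additivity
      have Hadd : ∀ x y : B₁, (p : B₂) ^ (n + 1) ∣ g (n + 1) (x + y) - (g (n + 1) x + g (n + 1) y) := by
        intro x y
        set a := g n (Y x) with ha
        set b := g n (Y y) with hb
        set t := g n (Sa x y) with ht
        set qB := eval₂ (Int.castRingHom B₂) ![a, b, t] Q with hqB
        have hc : (p : B₂) ^ n ∣ g n (Y (x + y)) - (a + b + (p : B₂) * t) := by
          rw [← hmk]
          have h2 := congrArg hh (hSa x y)
          rw [map_add, map_add, map_mul, map_natCast] at h2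
          rw [show Ideal.Quotient.mk I (g n (Y (x + y))) = hh (Y (x + y)) from rfl, h2]
          push_cast
          rw [map_add, map_add, map_mul, map_natCast]
          rfl
        have hpc : (p : B₂) ∣ g n (Y (x + y)) - (a + b + (p : B₂) * t) := by
          apply hdvdπ
          rw [hA, h1a, map_add, map_add, map_mul, hπp, zero_mul, add_zero, ha, hb, hA, hA]
        have hcp : (p : B₂) ^ (n + 1) ∣ g n (Y (x + y)) ^ p - (a + b + (p : B₂) * t) ^ p :=
          stmt16.pow_p_cong p n hpc hc
        have hE2 := stmt16.eval_Q hQ (![a, b, t])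
        simp only [Matrix.cons_val_zero, Matrix.cons_val_one, Matrix.head_cons,
          Matrix.cons_val_two, Matrix.tail_cons] at hE2
        have hZc : (p : B₂) ^ n ∣ g n (Z (x + y)) - (g n (Z x) + g n (Z y) - qB) := by
          rw [← hmk]
          have h2 := congrArg hh (hZadd x y)
          rw [map_sub, map_add, stmt16.eval_nat] at h2
          rw [show Ideal.Quotient.mk I (g n (Z (x + y))) = hh (Z (x + y)) from rfl, h2]
          rw [map_sub, map_add, hqB, stmt16.eval_nat]
          congr 2
          funext i
          fin_cases i <;> simp [hhh, ha, hb, ht]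
        have hfin : g (n + 1) (x + y) - (g (n + 1) x + g (n + 1) y)
            = (g n (Y (x + y)) ^ p - (a + b + (p : B₂) * t) ^ p)
              + (p : B₂) * (g n (Z (x + y)) - (g n (Z x) + g n (Z y) - qB)) := by
          rw [hgs, hgs, hgs]
          linear_combination -hE2
        rw [hfin]
        exact dvd_add hcp (by rw [pow_succ']; exact mul_dvd_mul_left _ hZc)
      
      have Hmul : ∀ x y : B₁, (p : B₂) ^ (n + 1) ∣ g (n + 1) (x * y) - g (n + 1) x * g (n + 1) y := by
        intro x y
        set a := g n (Y x) with ha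
        set b := g n (Y y) with hb
        set t := g n (Sm x y) with ht
        set qB := eval₂ (Int.castRingHom B₂) ![a * b, 0, t] Q with hqB
        have hc : (p : B₂) ^ n ∣ g n (Y (x * y)) - (a * b + (p : B₂) * t) := by
          rw [← hmk]
          have h2 := congrArg hh (hSm x y)
          rw [map_add, map_mul, map_mul, map_natCast] at h2
          rw [show Ideal.Quotient.mk I (g n (Y (x * y))) = hh (Y (x * y)) from rfl, h2]
          push_cast
          rw [map_add, map_mul, map_mul, map_natCast]
          rfl
        have hpc : (p : B₂) ∣ g n (Y (x * y)) - (a * b + (p : B₂) * t) := by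
          apply hdvdπ
          rw [hA, h1m, map_add, map_mul, map_mul, hπp, zero_mul, add_zero, ha, hb, hA, hA]
        have hcp : (p : B₂) ^ (n + 1) ∣ g n (Y (x * y)) ^ p - (a * b + (p : B₂) * t) ^ p :=
          stmt16.pow_p_cong p n hpc hc
        have hE2 := stmt16.eval_Q hQ (![a * b, 0, t])
        simp only [Matrix.cons_val_zero, Matrix.cons_val_one, Matrix.head_cons,
          Matrix.cons_val_two, Matrix.tail_cons] at hE2
        rw [add_zero, zero_pow hp.ne_zero, sub_zero] at hE2
        have hZc : (p : B₂) ^ n ∣ g n (Z (x * y))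
            - (a ^ p * g n (Z y) + b ^ p * g n (Z x) + (p : B₂) * (g n (Z x) * g n (Z y)) - qB) := by
          rw [← hmk]
          have h2 := congrArg hh (hZmul x y)
          rw [map_sub, map_add, map_add, map_mul, map_mul, map_mul, map_mul, map_pow, map_pow,
            map_natCast, stmt16.eval_nat] at h2
          rw [show Ideal.Quotient.mk I (g n (Z (x * y))) = hh (Z (x * y)) from rfl, h2]
          rw [map_sub, map_add, map_add, map_mul, map_mul, map_mul, map_mul, map_pow, map_pow,
            map_natCast, hqB, stmt16.eval_nat]
          congr 2
          funext i
          fin_cases i <;> simp [hh, ha, hb, ht]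
          · rfl
          · rfl
        have hfin : g (n + 1) (x * y) - g (n + 1) x * g (n + 1) y
            = (g n (Y (x * y)) ^ p - (a * b + (p : B₂) * t) ^ p)
              + (p : B₂) * (g n (Z (x * y))
                - (a ^ p * g n (Z y) + b ^ p * g n (Z x) + (p : B₂) * (g n (Z x) * g n (Z y)) - qB)) := by
          rw [hgs, hgs, hgs]
          linear_combination -hE2
        rw [hfin]
        exact dvd_add hcp (by rw [pow_succ']; exact mul_dvd_mul_left _ hZc)
      have Hone : (p : B₂) ^ (n + 1) ∣ g (n + 1) 1 - 1 := by
        set t := g n s₀ with ht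
        set qB := eval₂ (Int.castRingHom B₂) ![1, 0, t] Q with hqB
        have hc : (p : B₂) ^ n ∣ g n (Y 1) - (1 + (p : B₂) * t) := by
          rw [← hmk]
          have h2 := congrArg hh hs₀
          rw [map_add, map_mul, map_natCast, map_one] at h2
          rw [show Ideal.Quotient.mk I (g n (Y 1)) = hh (Y 1) from rfl, h2]
          push_cast
          rw [map_add, map_mul, map_natCast, map_one]
          rfl
        have hpc : (p : B₂) ∣ g n (Y 1) - (1 + (p : B₂) * t) := by
          apply hdvdπ
          rw [hA, h1o, map_add, map_mul, map_one, hπp, zero_mul, add_zero]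
        have hcp : (p : B₂) ^ (n + 1) ∣ g n (Y 1) ^ p - (1 + (p : B₂) * t) ^ p :=
          stmt16.pow_p_cong p n hpc hc
        have hE2 := stmt16.eval_Q hQ (![(1 : B₂), 0, t])
        simp only [Matrix.cons_val_zero, Matrix.cons_val_one, Matrix.head_cons,
          Matrix.cons_val_two, Matrix.tail_cons] at hE2
        rw [add_zero, one_pow, zero_pow hp.ne_zero, sub_zero] at hE2
        have hZc : (p : B₂) ^ n ∣ g n (Z 1) - (-qB) := by
          rw [← hmk]
          have h2 := congrArg hh hZ1
          rw [map_neg, stmt16.eval_nat] at h2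
          rw [show Ideal.Quotient.mk I (g n (Z 1)) = hh (Z 1) from rfl, h2]
          rw [map_neg, hqB, stmt16.eval_nat]
          congr 2
          funext i
          fin_cases i <;> simp [hh, ht]
          · rfl
        have hfin : g (n + 1) 1 - 1
            = (g n (Y 1) ^ p - (1 + (p : B₂) * t) ^ p)
              + (p : B₂) * (g n (Z 1) - (-qB)) := by
          rw [hgs]
          linear_combination -hE2
        rw [hfin]
        exact dvd_add hcp (by rw [pow_succ']; exact mul_dvd_mul_left _ hZc)
      exact ⟨Hadd, Hmul, Hone⟩
  
  -- the sequence is Cauchy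
  have hB : ∀ (n : ℕ) (x : B₁), (p : B₂) ^ n ∣ g (n + 1) x - g n x := by
    intro n
    induction n with
    | zero => intro x; rw [pow_zero]; exact one_dvd _
    | succ n ih =>
      intro x
      have h1 : (p : B₂) ∣ g (n + 1) (Y x) - g n (Y x) :=
        hdvdπ _ _ (by rw [hA (n + 1) (Y x), hA n (Y x)])
      have h2 : (p : B₂) ^ (n + 1) ∣ g (n + 1) (Y x) ^ p - g n (Y x) ^ p :=
        stmt16.pow_p_cong p n h1 (ih (Y x))
      have hfin : g (n + 2) x - g (n + 1) x
          = (g (n + 1) (Y x) ^ p - g n (Y x) ^ p)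
            + (p : B₂) * (g (n + 1) (Z x) - g n (Z x)) := by
        rw [hgs, hgs]; ring
      rw [hfin]
      exact dvd_add h2 (by rw [pow_succ']; exact mul_dvd_mul_left _ (ih (Z x)))
  have hBle : ∀ (n m : ℕ), n ≤ m → ∀ x : B₁, (p : B₂) ^ n ∣ g m x - g n x := by
    intro n m hnm
    induction m, hnm using Nat.le_induction with
    | base => intro x; rw [sub_self]; exact dvd_zero _
    | succ m hnm ih =>
      intro x
      have : g (m + 1) x - g n x = (g (m + 1) x - g m x) + (g m x - g n x) := by ring
      rw [this]
      exact dvd_add ((pow_dvd_pow _ hnm).trans (hB m x)) (ih x)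
  -- translate SModEq to divisibility
  have hsm : ∀ (a b : B₂) (n : ℕ),
      (a ≡ b [SMOD ((Ideal.span {(p : B₂)}) ^ n • ⊤ : Submodule B₂ B₂)])
      ↔ (p : B₂) ^ n ∣ a - b := by
    intro a b n
    rw [SModEq.sub_mem, smul_eq_mul, Ideal.mul_top, Ideal.span_singleton_pow,
      Ideal.mem_span_singleton]
  -- take the limit
  have hlim : ∀ x : B₁, ∃ L : B₂, ∀ n, (p : B₂) ^ n ∣ g n x - L := by
    intro x
    obtain ⟨L, hL⟩ := IsPrecomplete.prec (IsAdicComplete.toIsPrecomplete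
      (I := Ideal.span {(p : B₂)}) (M := B₂)) (f := fun n => g n x)
      (by
        intro m n hmn
        rw [hsm]
        have := hBle m n hmn x
        exact (dvd_sub_comm.mp this))
    refine ⟨L, fun n => ?_⟩
    have := hL n
    rw [hsm] at this
    exact this
  choose φf hφf using hlim
  have haus : ∀ d : B₂, (∀ n, (p : B₂) ^ n ∣ d) → d = 0 := by
    intro d hd
    refine IsHausdorff.haus (IsAdicComplete.toIsHausdorff
      (I := Ideal.span {(p : B₂)}) (M := B₂)) d (fun n => ?_)
    rw [hsm]
    simpa using hd n
  have hg0dvd : ∀ n, (p : B₂) ^ n ∣ g n 0 := by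
    intro n
    have h00 := (hH n).1 0 0
    rw [add_zero] at h00
    have : g n 0 = -(g n (0 : B₁) - (g n 0 + g n 0)) := by ring
    rw [this]
    exact h00.neg_right
  have hadd : ∀ x y : B₁, φf (x + y) = φf x + φf y := by
    intro x y
    have hdvd : ∀ n, (p : B₂) ^ n ∣ φf (x + y) - (φf x + φf y) := by
      intro n
      have h1 := hφf (x + y) n
      have h2 := hφf x n
      have h3 := hφf y n
      have h4 := (hH n).1 x y
      have : φf (x + y) - (φf x + φf y)
          = -(g n (x + y) - φf (x + y)) + (g n (x + y) - (g n x + g n y))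
            + (g n x - φf x) + (g n y - φf y) := by ring
      rw [this]
      exact dvd_add (dvd_add (dvd_add h1.neg_right h4) h2) h3
    exact sub_eq_zero.mp (haus _ hdvd)
  have hmul : ∀ x y : B₁, φf (x * y) = φf x * φf y := by
    intro x y
    have hdvd : ∀ n, (p : B₂) ^ n ∣ φf (x * y) - φf x * φf y := by
      intro n
      have h1 := hφf (x * y) n
      have h2 := hφf x n
      have h3 := hφf y n
      have h4 := (hH n).2.1 x y
      have : φf (x * y) - φf x * φf y
          = -(g n (x * y) - φf (x * y)) + (g n (x * y) - g n x * g n y)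
            + (g n x - φf x) * g n y + φf x * (g n y - φf y)
            + (g n x - φf x) * (φf y - g n y) + (g n x - φf x) * (g n y - φf y) := by ring
      rw [this]
      exact dvd_add (dvd_add (dvd_add (dvd_add (dvd_add h1.neg_right h4) (h2.mul_right _))
        ((h3.mul_left _))) (h2.mul_right _)) (h2.mul_right _)
    exact sub_eq_zero.mp (haus _ hdvd)
  have hone : φf 1 = 1 := by
    have hdvd : ∀ n, (p : B₂) ^ n ∣ φf 1 - 1 := by
      intro n
      have h1 := hφf 1 n
      have h4 := (hH n).2.2
      have : φf 1 - 1 = -(g n 1 - φf 1) + (g n 1 - 1) := by ring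
      rw [this]
      exact dvd_add h1.neg_right h4
    exact sub_eq_zero.mp (haus _ hdvd)
  have hzero : φf 0 = 0 := by
    have hdvd : ∀ n, (p : B₂) ^ n ∣ φf 0 - 0 := by
      intro n
      have h1 := hφf 0 n
      have : φf 0 - 0 = -(g n 0 - φf 0) + g n 0 := by ring
      rw [this]
      exact dvd_add h1.neg_right (hg0dvd n)
    exact sub_eq_zero.mp (haus _ hdvd)
  let φ : B₁ →+* B₂ :=
    { toFun := φf
      map_one' := hone
      map_mul' := hmul
      map_zero' := hzero
      map_add' := hadd }
  refine ⟨φ, ?_⟩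
  ext x
  have h1 := hφf x 1
  rw [pow_one] at h1
  obtain ⟨t, ht⟩ := h1
  have hφx : φf x = g 1 x - (p : B₂) * t := by linear_combination -ht
  show π₂ (φf x) = π₁ x
  rw [hφx, map_sub, map_mul, hπp, zero_mul, sub_zero, hA]

private lemma stmt16.key_unique {A B₁ B₂ : Type*} [CommRing A] [CommRing B₁] [CommRing B₂]
    (p : ℕ) (hp : p.Prime)
    (hperf : Function.Surjective (fun x : A => x ^ p))
    (π₁ : B₁ →+* A) (π₂ : B₂ →+* A)
    (h₁s : Function.Surjective π₁)
    (hk₁ : ∀ x : B₁, π₁ x = 0 ↔ (p : B₁) ∣ x)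
    (hk₂ : ∀ x : B₂, π₂ x = 0 ↔ (p : B₂) ∣ x)
    [IsHausdorff (Ideal.span {(p : B₂)}) B₂]
    (φ ψ : B₁ →+* B₂) (hφ : π₂.comp φ = π₁) (hψ : π₂.comp ψ = π₁) : φ = ψ := by
  have hdec : ∀ x : B₁, ∃ y z, x = y ^ p + (p : B₁) * z := by
    intro x
    obtain ⟨b, hb⟩ := hperf (π₁ x)
    obtain ⟨y, hy⟩ := h₁s b
    have hd : (p : B₁) ∣ x - y ^ p := (hk₁ _).mp (by
      rw [map_sub, map_pow, hy]
      simp only at hb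
      rw [hb, sub_self])
    obtain ⟨z, hz⟩ := hd
    exact ⟨y, z, by linear_combination hz⟩
  have hdvd1 : ∀ x : B₁, (p : B₂) ∣ φ x - ψ x := by
    intro x
    refine (hk₂ _).mp ?_
    rw [map_sub]
    have h1 := RingHom.congr_fun hφ x
    have h2 := RingHom.congr_fun hψ x
    simp only [RingHom.comp_apply] at h1 h2
    rw [h1, h2, sub_self]
  have key : ∀ (n : ℕ) (x : B₁), (p : B₂) ^ n ∣ φ x - ψ x := by
    intro n
    induction n with
    | zero => intro x; rw [pow_zero]; exact one_dvd _
    | succ n ih =>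
      intro x
      obtain ⟨y, z, hyz⟩ := hdec x
      have h1 : (p : B₂) ^ (n + 1) ∣ (φ y) ^ p - (ψ y) ^ p :=
        stmt16.pow_p_cong p n (hdvd1 y) (ih y)
      have h2 : φ x - ψ x = ((φ y) ^ p - (ψ y) ^ p) + (p : B₂) * (φ z - ψ z) := by
        rw [hyz]
        simp only [map_add, map_mul, map_pow, map_natCast]
        ring
      rw [h2]
      exact dvd_add h1 (by rw [pow_succ']; exact mul_dvd_mul_left _ (ih z))
  ext x
  have haus : ∀ d : B₂, (∀ n, (p : B₂) ^ n ∣ d) → d = 0 := by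
    intro d hd
    refine IsHausdorff.haus (inferInstance : IsHausdorff (Ideal.span {(p : B₂)}) B₂) d
      (fun n => ?_)
    rw [SModEq.sub_mem, smul_eq_mul, Ideal.mul_top, Ideal.span_singleton_pow,
      Ideal.mem_span_singleton, sub_zero]
    exact hd n
  exact sub_eq_zero.mp (haus _ (fun n => key n x))

/-- Any two `p`-adic deformations of a perfect `𝔽_p`-algebra `A` (that is,
`p`-torsion free, `p`-adically complete rings with reduction mod `p`
isomorphic to `A`) are isomorphic by an isomorphism lifting the identity. -/
theorem stmt16 {A A₁ A₂ : Type*} [CommRing A] [CommRing A₁] [CommRing A₂]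
    (p : ℕ) (hp : p.Prime) [CharP A p]
    (hperf : Function.Bijective (fun x : A => x ^ p))
    (h₁tf : (p : A₁) ∈ nonZeroDivisors A₁)
    (h₂tf : (p : A₂) ∈ nonZeroDivisors A₂)
    [IsAdicComplete (Ideal.span {(p : A₁)}) A₁]
    [IsAdicComplete (Ideal.span {(p : A₂)}) A₂]
    (e₁ : (A₁ ⧸ Ideal.span {(p : A₁)}) ≃+* A)
    (e₂ : (A₂ ⧸ Ideal.span {(p : A₂)}) ≃+* A) :
    ∃ φ : A₁ ≃+* A₂, ∀ x : A₁,
      e₂ (Ideal.Quotient.mk (Ideal.span {(p : A₂)}) (φ x))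
        = e₁ (Ideal.Quotient.mk (Ideal.span {(p : A₁)}) x) := by
  set π₁ : A₁ →+* A := e₁.toRingHom.comp (Ideal.Quotient.mk (Ideal.span {(p : A₁)})) with hπ₁
  set π₂ : A₂ →+* A := e₂.toRingHom.comp (Ideal.Quotient.mk (Ideal.span {(p : A₂)})) with hπ₂
  have h₁s : Function.Surjective π₁ := e₁.surjective.comp Ideal.Quotient.mk_surjective
  have h₂s : Function.Surjective π₂ := e₂.surjective.comp Ideal.Quotient.mk_surjective
  have hk₁ : ∀ x : A₁, π₁ x = 0 ↔ (p : A₁) ∣ x := by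
    intro x
    rw [hπ₁, RingHom.comp_apply]
    simp only [RingEquiv.toRingHom_eq_coe, RingHom.coe_coe]
    rw [RingEquiv.map_eq_zero_iff, Ideal.Quotient.eq_zero_iff_mem, Ideal.mem_span_singleton]
  have hk₂ : ∀ x : A₂, π₂ x = 0 ↔ (p : A₂) ∣ x := by
    intro x
    rw [hπ₂, RingHom.comp_apply]
    simp only [RingEquiv.toRingHom_eq_coe, RingHom.coe_coe]
    rw [RingEquiv.map_eq_zero_iff, Ideal.Quotient.eq_zero_iff_mem, Ideal.mem_span_singleton]
  obtain ⟨φ, hφ⟩ := stmt16.key_exists p hp hperf π₁ π₂ h₁s h₂s hk₁ hk₂ h₁tf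
  obtain ⟨ψ, hψ⟩ := stmt16.key_exists p hp hperf π₂ π₁ h₂s h₁s hk₂ hk₁ h₂tf
  have h1 : ψ.comp φ = RingHom.id A₁ := by
    refine stmt16.key_unique p hp hperf.2 π₁ π₁ h₁s hk₁ hk₁ _ _ ?_ ?_
    · rw [← RingHom.comp_assoc, hψ, hφ]
    · rw [RingHom.comp_id]
  have h2 : φ.comp ψ = RingHom.id A₂ := by
    refine stmt16.key_unique p hp hperf.2 π₂ π₂ h₂s hk₂ hk₂ _ _ ?_ ?_
    · rw [← RingHom.comp_assoc, hφ, hψ]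
    · rw [RingHom.comp_id]
  refine ⟨RingEquiv.ofRingHom φ ψ h2 h1, fun x => ?_⟩
  have := RingHom.congr_fun hφ x
  simpa [hπ₁, hπ₂] using this
end
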